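/- arXiv:2112.02395 — 9 statements merged into one kernel-verified Lean document; each statement's English description precedes it below -/
import Mathlib

section
/- For any finite group G, the order superenhanced power graph of G equals the order supercommuting graph of G; that is, for all x, y in G, there exist x', y' of the same orders as x, y respectively with x' and y' commuting if and only if there exist x'', y'' of the same orders as x, y respectively such that the subgroup generated by x'' and y'' is cyclic. -/
theorem stmt_1 (G : Type*) [Group G] [Finite G] (x y : G) :
    (∃ x'' y'' : G, orderOf x'' = orderOf x ∧ orderOf y'' = orderOf y ∧
      IsCyclic ↥(Subgroup.closure ({x'', y''} : Set G))) ↔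
    (∃ x' y' : G, orderOf x' = orderOf x ∧ orderOf y' = orderOf y ∧ Commute x' y') := by
  constructor
  · rintro ⟨a, b, ha, hb, hc⟩
    refine ⟨a, b, ha, hb, ?_⟩
    have haH : a ∈ Subgroup.closure ({a, b} : Set G) :=
      Subgroup.subset_closure (by simp)
    have hbH : b ∈ Subgroup.closure ({a, b} : Set G) :=
      Subgroup.subset_closure (by simp)
    obtain ⟨g, hg⟩ := hc.exists_generator
    obtain ⟨i, hi⟩ := hg ⟨a, haH⟩
    obtain ⟨j, hj⟩ := hg ⟨b, hbH⟩
    have hia : a = (g : G) ^ i := by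
      simpa using (congrArg Subtype.val hi).symm
    have hjb : b = (g : G) ^ j := by
      simpa using (congrArg Subtype.val hj).symm
    have hcomm := (Commute.refl (g : G)).zpow_zpow i j
    rw [← hia, ← hjb] at hcomm
    exact hcomm
  · rintro ⟨a, b, ha, hb, hc⟩
    obtain ⟨z, -, hz⟩ := hc.exists_orderOf_eq_lcm
    set m := orderOf a with hm
    set n := orderOf b with hn
    have hm0 : m ≠ 0 := (orderOf_pos a).ne'
    have hn0 : n ≠ 0 := (orderOf_pos b).ne'
    have hl0 : Nat.lcm m n ≠ 0 := Nat.lcm_ne_zero hm0 hn0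
    have hmd : m ∣ Nat.lcm m n := Nat.dvd_lcm_left m n
    have hnd : n ∣ Nat.lcm m n := Nat.dvd_lcm_right m n
    refine ⟨z ^ (Nat.lcm m n / m), z ^ (Nat.lcm m n / n), ?_, ?_, ?_⟩
    · rw [orderOf_pow, hz]
      rw [Nat.gcd_eq_right (Nat.div_dvd_of_dvd hmd)]
      rw [Nat.div_div_self hmd hl0, ← ha]
    · rw [orderOf_pow, hz]
      rw [Nat.gcd_eq_right (Nat.div_dvd_of_dvd hnd)]
      rw [Nat.div_div_self hnd hl0, ← hb]
    · have hle : Subgroup.closure ({z ^ (Nat.lcm m n / m), z ^ (Nat.lcm m n / n)} : Set G)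
          ≤ Subgroup.zpowers z := by
        rw [Subgroup.closure_le]
        rintro w (rfl | rfl) <;> exact Subgroup.npow_mem_zpowers _ _
      have e := Subgroup.subgroupOfEquivOfLe hle
      haveI : IsCyclic ↥(Subgroup.zpowers z) := by
        refine ⟨⟨⟨z, Subgroup.mem_zpowers z⟩, ?_⟩⟩
        rintro ⟨w, k, rfl⟩
        exact ⟨k, Subtype.ext (by simp)⟩
      exact isCyclic_of_surjective e e.surjective
end

section
/- In a 2-Engel group G (i.e., [[x,g],g]=1 for all x,g), the centralizer C_G(x) of every element x is a normal subgroup of G. -/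
private lemma comm_lemma {G : Type*} [Group G]
    (h : ∀ x g : G, (x⁻¹ * g⁻¹ * x * g)⁻¹ * g⁻¹ * (x⁻¹ * g⁻¹ * x * g) * g = 1)
    {x y : G} (hxy : x * y = y * x) (g : G) :
    (x⁻¹ * g⁻¹ * x * g) * y = y * (x⁻¹ * g⁻¹ * x * g) := by
  set c := x⁻¹ * g⁻¹ * x * g with hc
  -- c commutes with g
  have h1 : c * g = g * c := by
    have := h x g
    rw [← hc] at this
    have : c⁻¹ * g⁻¹ * c * g = 1 := this
    calc c * g = (g * c) * (c⁻¹ * g⁻¹ * c * g) := by group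
    _ = (g * c) * 1 := by rw [this]
    _ = g * c := by rw [mul_one]
  -- [x, y*g] = c
  have h2 : x⁻¹ * (y * g)⁻¹ * x * (y * g) = c := by
    have hy : y⁻¹ * x * y = x := by
      rw [mul_assoc, hxy]; group
    calc x⁻¹ * (y * g)⁻¹ * x * (y * g)
        = x⁻¹ * g⁻¹ * (y⁻¹ * x * y) * g := by group
    _ = x⁻¹ * g⁻¹ * x * g := by rw [hy]
  -- c commutes with y*g
  have h3 : c * (y * g) = (y * g) * c := by
    have := h x (y * g)
    rw [h2] at this
    calc c * (y * g) = ((y * g) * c) * (c⁻¹ * (y*g)⁻¹ * c * (y*g)) := by group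
    _ = ((y * g) * c) * 1 := by rw [this]
    _ = (y * g) * c := by rw [mul_one]
  -- conclude
  calc c * y = c * (y * g) * g⁻¹ := by group
  _ = (y * g) * c * g⁻¹ := by rw [h3]
  _ = y * (g * c) * g⁻¹ := by group
  _ = y * (c * g) * g⁻¹ := by rw [← h1]
  _ = y * c := by group

theorem stmt_4 (G : Type*) [Group G]
    (h : ∀ x g : G, (x⁻¹ * g⁻¹ * x * g)⁻¹ * g⁻¹ * (x⁻¹ * g⁻¹ * x * g) * g = 1) :
    ∀ x : G, (Subgroup.centralizer {x}).Normal := by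
  intro x
  constructor
  intro y hy g
  rw [Subgroup.mem_centralizer_iff] at hy ⊢
  simp only [Set.mem_singleton_iff, forall_eq] at hy ⊢
  -- hy : x * y = y * x; goal : x * (g*y*g⁻¹) = (g*y*g⁻¹) * x
  have key := comm_lemma h hy g
  have key2 : (g⁻¹ * x * g) * y = y * (g⁻¹ * x * g) := by
    calc (g⁻¹ * x * g) * y = x * ((x⁻¹ * g⁻¹ * x * g) * y) := by group
    _ = x * (y * (x⁻¹ * g⁻¹ * x * g)) := by rw [key]
    _ = (x * y) * (x⁻¹ * g⁻¹ * x * g) := by group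
    _ = (y * x) * (x⁻¹ * g⁻¹ * x * g) := by rw [hy]
    _ = y * (g⁻¹ * x * g) := by group
  calc x * (g * y * g⁻¹) = g * ((g⁻¹ * x * g) * y) * g⁻¹ := by group
  _ = g * (y * (g⁻¹ * x * g)) * g⁻¹ := by rw [key2]
  _ = (g * y * g⁻¹) * x := by group
end

section
/- For a finite group G, the commuting graph of G equals the conjugacy supercommuting graph of G (i.e., for all x,y: xy=yx iff some conjugate of y commutes with x) if and only if the centralizer of every element of G is a normal subgroup of G. -/
theorem stmt_5 (G : Type*) [Group G] [Finite G] :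
    (∀ x y : G, Commute x y ↔ ∃ g : G, Commute x (g⁻¹ * y * g)) ↔
    (∀ x : G, (Subgroup.centralizer {x}).Normal) := by
  constructor
  · intro h x
    constructor
    intro n hn g
    rw [Subgroup.mem_centralizer_singleton_iff] at hn ⊢
    have hc : Commute x n := hn.symm
    have : ∃ k : G, Commute x (k⁻¹ * (g * n * g⁻¹) * k) := ⟨g, by
      have : g⁻¹ * (g * n * g⁻¹) * g = n := by group
      rw [this]; exact hc⟩
    exact ((h x (g * n * g⁻¹)).mpr this).symm
  · intro h x y
    constructor
    · intro hc; exact ⟨1, by simpa using hc⟩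
    · rintro ⟨g, hg⟩
      have hmem : g⁻¹ * y * g ∈ Subgroup.centralizer {x} := by
        rw [Subgroup.mem_centralizer_singleton_iff]; exact hg.symm
      have := (h x).conj_mem _ hmem g
      rw [Subgroup.mem_centralizer_singleton_iff] at this
      have hy : g * (g⁻¹ * y * g) * g⁻¹ = y := by group
      rw [hy] at this
      exact this.symm
end

section
/- Let G be a finite group in which the power graph equals the conjugacy superpower graph, i.e., whenever some conjugate of x is a power of some conjugate of y or vice versa, then x is a power of y or y is a power of x. Then every subgroup of G is normal (G is a Dedekind group). -/
theorem stmt_6 (G : Type*) [Group G] [Finite G]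
    (h : ∀ x y : G,
      (∃ a b : G, (∃ n : ℤ, a⁻¹ * x * a = (b⁻¹ * y * b) ^ n) ∨
        (∃ n : ℤ, b⁻¹ * y * b = (a⁻¹ * x * a) ^ n)) →
      ((∃ n : ℤ, x = y ^ n) ∨ (∃ n : ℤ, y = x ^ n))) :
    ∀ H : Subgroup G, H.Normal := by
  have key : ∀ (x g : G), ∃ n : ℤ, g⁻¹ * x * g = x ^ n := by
    intro x g
    have h2 := h x (g⁻¹ * x * g) ⟨1, g⁻¹, Or.inl ⟨1, by group⟩⟩
    rcases h2 with ⟨n, hn⟩ | ⟨n, hn⟩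
    · -- x = (g⁻¹ x g)^n, so zpowers x ≤ zpowers (g⁻¹ x g); equal cards → equal
      set y := g⁻¹ * x * g with hy
      have hord : orderOf y = orderOf x := by
        have : SemiconjBy g y x := by
          unfold SemiconjBy; rw [hy]; group
        exact this.orderOf_eq
      have hle : Subgroup.zpowers x ≤ Subgroup.zpowers y := by
        rw [Subgroup.zpowers_le]
        exact ⟨n, hn.symm⟩
      have heq : Subgroup.zpowers x = Subgroup.zpowers y := by
        apply Subgroup.eq_of_le_of_card_ge hle
        rw [Nat.card_zpowers, Nat.card_zpowers, hord]
      have : y ∈ Subgroup.zpowers x := heq ▸ Subgroup.mem_zpowers y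
      obtain ⟨m, hm⟩ := this
      exact ⟨m, hm.symm⟩
    · exact ⟨n, hn⟩
  intro H
  constructor
  intro a ha g
  obtain ⟨n, hn⟩ := key a g⁻¹
  have : g * a * g⁻¹ = a ^ n := by rwa [inv_inv] at hn
  rw [this]
  exact H.zpow_mem ha n
end

section
/- If G is a finite Dedekind group (every subgroup is normal), then the enhanced power graph of G equals the conjugacy superenhanced power graph of G: whenever there exist conjugates x' of x and y' of y with ⟨x', y'⟩ cyclic, then ⟨x, y⟩ is cyclic. -/
theorem stmt_7 (G : Type*) [Group G] [Finite G]
    (hded : ∀ H : Subgroup G, H.Normal) :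
    ∀ x y : G,
      (∃ a b : G, IsCyclic ↥(Subgroup.closure ({a⁻¹ * x * a, b⁻¹ * y * b} : Set G))) →
      IsCyclic ↥(Subgroup.closure ({x, y} : Set G)) := by
  intro x y ⟨a, b, hcyc⟩
  set x' := a⁻¹ * x * a with hx'
  set y' := b⁻¹ * y * b with hy'
  set K := Subgroup.closure ({x', y'} : Set G) with hK
  -- x is a conjugate of x', and ⟨x'⟩ is normal, so x ∈ ⟨x'⟩ ≤ K
  have hxmem : x ∈ K := by
    have hnorm := hded (Subgroup.zpowers x')
    have hx'mem : x' ∈ Subgroup.zpowers x' := Subgroup.mem_zpowers x'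
    have : a * x' * a⁻¹ ∈ Subgroup.zpowers x' := hnorm.conj_mem x' hx'mem a
    have hxeq : a * x' * a⁻¹ = x := by
      rw [hx']; group
    rw [hxeq] at this
    exact Subgroup.zpowers_le.mpr (Subgroup.subset_closure (by simp)) this
  have hymem : y ∈ K := by
    have hnorm := hded (Subgroup.zpowers y')
    have hy'mem : y' ∈ Subgroup.zpowers y' := Subgroup.mem_zpowers y'
    have : b * y' * b⁻¹ ∈ Subgroup.zpowers y' := hnorm.conj_mem y' hy'mem b
    have hyeq : b * y' * b⁻¹ = y := by
      rw [hy']; group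
    rw [hyeq] at this
    exact Subgroup.zpowers_le.mpr (Subgroup.subset_closure (by simp)) this
  have hle : Subgroup.closure ({x, y} : Set G) ≤ K := by
    rw [Subgroup.closure_le]
    rintro z (rfl | rfl)
    · exact hxmem
    · exact hymem
  haveI : IsCyclic ↥K := hcyc
  haveI : IsCyclic ↥((Subgroup.closure ({x, y} : Set G)).subgroupOf K) :=
    Subgroup.isCyclic _
  exact isCyclic_of_surjective _ (Subgroup.subgroupOfEquivOfLe hle).surjective
end

section
/- Jordan's theorem: if H is a proper subgroup of a finite group G, then there is an element g of G whose conjugacy class is disjoint from H; equivalently, G is not the union of the conjugates of a proper subgroup. -/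
/-!
By Burnside's lemma, a transitive action of a finite group has on average exactly one fixed point
per group element. The identity fixes every point, so if there are at least two points, some
element fixes none. Apply this to the action of `G` on `G ⧸ H`, where `g` fixes the coset `x H`
exactly when `x⁻¹ g x ∈ H`.
-/

open MulAction

theorem MulAction.exists_forall_smul_ne_of_isPretransitive (G α : Type*) [Group G] [Finite G]
    [MulAction G α] [Finite α] [Nontrivial α] [IsPretransitive G α] :
    ∃ g : G, ∀ a : α, g • a ≠ a := by
  classical
  have := Fintype.ofFinite G
  have := Fintype.ofFinite α
  have := ((pretransitive_iff_unique_quotient_of_nonempty G α).mp inferInstance).some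
  have burnside := sum_card_fixedBy_eq_card_orbits_mul_card_group G α
  rw [Fintype.card_unique, one_mul] at burnside
  by_contra! hfix
  have hpos (g : G) : 1 ≤ Fintype.card (fixedBy α g) := by
    obtain ⟨a, ha⟩ := hfix g
    exact Fintype.card_pos_iff.mpr ⟨⟨a, ha⟩⟩
  have hone : 1 < Fintype.card (fixedBy α (1 : G)) := by
    simpa [fixedBy] using Fintype.one_lt_card (α := α)
  have := Finset.sum_lt_sum (s := Finset.univ) (fun g _ ↦ hpos g) ⟨1, Finset.mem_univ _, hone⟩
  rw [Finset.sum_const, Finset.card_univ, smul_eq_mul, mul_one, burnside] at this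
  exact this.false

theorem QuotientGroup.smul_mk_eq_mk_iff {G : Type*} [Group G] (H : Subgroup G) (g x : G) :
    g • (x : G ⧸ H) = x ↔ x⁻¹ * g * x ∈ H := by
  rw [MulAction.Quotient.smul_mk, QuotientGroup.eq, ← H.inv_mem_iff]
  simp [mul_assoc]

theorem stmt_8 (G : Type*) [Group G] [Finite G] (H : Subgroup G) (hH : H ≠ ⊤) :
    ∃ g : G, ∀ x : G, x⁻¹ * g * x ∉ H := by
  have : Nontrivial (G ⧸ H) := QuotientGroup.nontrivial_iff.mpr hH
  obtain ⟨g, hg⟩ := exists_forall_smul_ne_of_isPretransitive G (G ⧸ H)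
  exact ⟨g, fun x ↦ (QuotientGroup.smul_mk_eq_mk_iff H g x).not.mp (hg x)⟩
end

section
/- Let G be a finite group whose order supercommuting graph is complete. Then the set of element orders of G is closed under least common multiples, and consequently G contains an element whose order is the exponent of G. -/
theorem stmt_12 (G : Type*) [Group G] [Finite G]
    (h : ∀ x y : G, ∃ x' y' : G,
      orderOf x' = orderOf x ∧ orderOf y' = orderOf y ∧ Commute x' y') :
    (∀ x y : G, ∃ z : G, orderOf z = Nat.lcm (orderOf x) (orderOf y)) ∧
      ∃ g : G, orderOf g = Monoid.exponent G := by
  have key : ∀ x y : G, ∃ z : G, orderOf z = Nat.lcm (orderOf x) (orderOf y) := by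
    intro x y
    obtain ⟨x', y', hx, hy, hc⟩ := h x y
    obtain ⟨z, -, hz⟩ := hc.exists_orderOf_eq_lcm
    exact ⟨z, by rw [hz, hx, hy]⟩
  refine ⟨key, ?_⟩
  obtain ⟨g, hg⟩ := Finite.exists_max (orderOf : G → ℕ)
  have hdvd : ∀ x : G, orderOf x ∣ orderOf g := by
    intro x
    obtain ⟨z, hz⟩ := key g x
    have h1 : orderOf g ∣ orderOf z := hz ▸ Nat.dvd_lcm_left _ _
    have h2 : orderOf z = orderOf g :=
      le_antisymm (hg z) (Nat.le_of_dvd (orderOf_pos z) h1)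
    exact h2 ▸ hz ▸ Nat.dvd_lcm_right _ _
  refine ⟨g, Nat.dvd_antisymm (Monoid.order_dvd_exponent g)
    (Monoid.exponent_dvd_of_forall_pow_eq_one fun x => orderOf_dvd_iff_pow_eq_one.mp (hdvd x))⟩
end

section
/- Let G be a finite group whose order is divisible by at least two distinct primes, and let m be the exponent of G. An element g of G is dominant in the order superpower graph (joined to every other vertex) if and only if g = 1 or o(g) = m. -/
theorem stmt_15 (G : Type*) [Group G] [Finite G]
    (hpq : ∃ p q : ℕ, p.Prime ∧ q.Prime ∧ p ≠ q ∧ p ∣ Nat.card G ∧ q ∣ Nat.card G)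
    (g : G) :
    (∀ h : G, h ≠ g → orderOf g ∣ orderOf h ∨ orderOf h ∣ orderOf g) ↔
      (g = 1 ∨ orderOf g = Monoid.exponent G) := by
  obtain ⟨p, q, hp, hq, hpqne, hpd, hqd⟩ := hpq
  constructor
  · intro hdom
    rcases eq_or_ne g 1 with rfl | hg1
    · exact Or.inl rfl
    right
    have hn1' : 1 < orderOf g := by
      have h0 := orderOf_pos g
      have h1 : orderOf g ≠ 1 := fun h => hg1 (orderOf_eq_one_iff.mp h)
      omega
    set n := orderOf g with hn
    have hn1 : 1 < n := hn1'
    -- n is not prime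
    have hnp : ∀ r : ℕ, r.Prime → n ≠ r := by
      intro r hr hnr
      -- pick a prime s dividing |G| with s ≠ r
      obtain ⟨s, hs, hsr, hsd⟩ : ∃ s : ℕ, s.Prime ∧ s ≠ r ∧ s ∣ Nat.card G := by
        rcases eq_or_ne p r with rfl | h
        · exact ⟨q, hq, fun h => hpqne h.symm, hqd⟩
        · exact ⟨p, hp, h, hpd⟩
      haveI := Fact.mk hs
      obtain ⟨y, hy⟩ := exists_prime_orderOf_dvd_card' (G := G) s hsd
      have hyg : y ≠ g := by
        intro h; rw [h, ← hn, hnr] at hy; exact hsr hy.symm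
      rcases hdom y hyg with h | h
      · rw [hnr, hy] at h
        exact hsr ((Nat.prime_dvd_prime_iff_eq hr hs).mp h).symm
      · rw [hnr, hy] at h
        exact hsr ((Nat.prime_dvd_prime_iff_eq hs hr).mp h)
    -- every prime dividing |G| divides n
    have hdvd : ∀ r : ℕ, r.Prime → r ∣ Nat.card G → r ∣ n := by
      intro r hr hrd
      haveI := Fact.mk hr
      obtain ⟨x, hx⟩ := exists_prime_orderOf_dvd_card' (G := G) r hrd
      have hxg : x ≠ g := by
        intro h; rw [h, ← hn] at hx; exact hnp r hr hx
      rcases hdom x hxg with h | h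
      · rw [hx] at h
        rcases (Nat.dvd_prime hr).mp h with h1 | h1
        · omega
        · exact absurd h1 (hnp r hr)
      · rw [hx] at h; exact h
    have hpn : p ∣ n := hdvd p hp hpd
    have hqn : q ∣ n := hdvd q hq hqd
    -- prove equality by mutual divisibility
    have hle : n ∣ Monoid.exponent G := Monoid.order_dvd_exponent g
    have hexp0 : Monoid.exponent G ≠ 0 := Monoid.exponent_ne_zero_of_finite
    have hge : Monoid.exponent G ∣ n := by
      rw [← Nat.factorization_le_iff_dvd hexp0 (by omega)]
      intro r
      rcases Nat.eq_zero_or_pos ((Monoid.exponent G).factorization r) with h0 | hpos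
      · simp [h0]
      have hr : r.Prime := Nat.prime_of_mem_primeFactors
        (by rw [← Nat.support_factorization]; exact Finsupp.mem_support_iff.mpr hpos.ne')
      obtain ⟨z, hz⟩ := hr.exists_orderOf_eq_pow_factorization_exponent (G := G)
      set a := (Monoid.exponent G).factorization r with ha
      -- z ≠ g : otherwise n = r^a, but n has two distinct prime divisors
      have hzg : z ≠ g := by
        intro h
        rw [h, ← hn] at hz
        obtain ⟨s, hs, hsr, hsn⟩ : ∃ s : ℕ, s.Prime ∧ s ≠ r ∧ s ∣ n := by
          rcases eq_or_ne p r with rfl | h'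
          · exact ⟨q, hq, fun h'' => hpqne h''.symm, hqn⟩
          · exact ⟨p, hp, h', hpn⟩
        have : s ∣ r ^ a := hz ▸ hsn
        exact hsr ((Nat.prime_dvd_prime_iff_eq hs hr).mp (hs.dvd_of_dvd_pow this))
      rcases hdom z hzg with h | h
      · -- n ∣ r^a : impossible since n has a prime divisor ≠ r
        exfalso
        obtain ⟨s, hs, hsr, hsn⟩ : ∃ s : ℕ, s.Prime ∧ s ≠ r ∧ s ∣ n := by
          rcases eq_or_ne p r with rfl | h'
          · exact ⟨q, hq, fun h'' => hpqne h''.symm, hqn⟩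
          · exact ⟨p, hp, h', hpn⟩
        rw [hz] at h
        have : s ∣ r ^ a := hsn.trans h
        exact hsr ((Nat.prime_dvd_prime_iff_eq hs hr).mp (hs.dvd_of_dvd_pow this))
      · -- r^a ∣ n, so factorization bound holds
        rw [hz] at h
        calc a = (r ^ a).factorization r := by
                simp [Nat.Prime.factorization_pow, hr]
          _ ≤ n.factorization r := by
                exact (Nat.factorization_le_iff_dvd (pow_ne_zero a hr.pos.ne') (by omega)).mpr h r
    exact Nat.dvd_antisymm hle hge
  · rintro (rfl | hm) h _
    · left; simp
    · right; rw [hm]; exact Monoid.order_dvd_exponent h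
end

section
/- If G is a finite abelian group, then the conjugacy supercommuting graph of G is complete, and conversely, if the conjugacy superenhanced power graph of a finite group G is complete then G is cyclic. -/
/-!
Take `g` of maximal order. If conjugates `g'` of `g` and `y'` of `y` generate a cyclic group `C`,
then `|C|` is the order of a generator, hence at most `ord g' = ord g`, so `C = ⟨g'⟩` and `y` is
conjugate into `⟨g⟩`. Thus every element of `G` has a conjugate in `⟨g⟩`, and a finite group is
never the union of the conjugates of a proper subgroup, so `⟨g⟩ = G`.
-/

open MulAction Subgroup

theorem Subgroup.eq_top_of_forall_exists_conj_mem {G : Type*} [Group G] [Finite G]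
    (H : Subgroup G) (hH : ∀ g : G, ∃ a : G, a * g * a⁻¹ ∈ H) : H = ⊤ := by
  classical
  cases nonempty_fintype G
  -- Burnside's lemma for `G` acting on `G ⧸ H`: every `g` fixes the coset `a⁻¹H`, and `1` fixes
  -- all `[G : H]` cosets, while the fixed points add up to `|G|` since the action is transitive.
  have hfix : ∀ g : G, 1 ≤ Fintype.card (fixedBy (G ⧸ H) g) := by
    intro g
    obtain ⟨a, ha⟩ := hH g
    refine Fintype.card_pos_iff.mpr ⟨⟨(a⁻¹ : G), ?_⟩⟩
    rw [mem_fixedBy, Quotient.smul_mk, QuotientGroup.eq, smul_eq_mul]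
    simpa [mul_assoc] using H.inv_mem ha
  have hone : Fintype.card (fixedBy (G ⧸ H) (1 : G)) = H.index := by
    simp [fixedBy_one_eq_univ, index_eq_card, Nat.card_eq_fintype_card]
  have horbits : Fintype.card (Quotient (orbitRel G (G ⧸ H))) ≤ 1 :=
    Fintype.card_le_one_iff_subsingleton.mpr <|
      (pretransitive_iff_subsingleton_quotient G (G ⧸ H)).mp inferInstance
  have hrest : Fintype.card G - 1 ≤
      ∑ g ∈ (Finset.univ : Finset G).erase 1, Fintype.card (fixedBy (G ⧸ H) g) := by
    simpa using Finset.card_nsmul_le_sum (Finset.univ.erase 1) _ 1 fun g _ => hfix g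
  have hcount : H.index + (Fintype.card G - 1) ≤ Fintype.card G :=
    calc H.index + (Fintype.card G - 1)
        ≤ Fintype.card (fixedBy (G ⧸ H) (1 : G)) +
            ∑ g ∈ (Finset.univ : Finset G).erase 1, Fintype.card (fixedBy (G ⧸ H) g) :=
          Nat.add_le_add hone.ge hrest
      _ = Fintype.card (Quotient (orbitRel G (G ⧸ H))) * Fintype.card G :=
          (Finset.add_sum_erase _ _ (Finset.mem_univ 1)).trans
            (sum_card_fixedBy_eq_card_orbits_mul_card_group G (G ⧸ H))
      _ ≤ Fintype.card G := mul_le_of_le_one_left (Nat.zero_le _) horbits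
  have hcard_pos : 0 < Fintype.card G := Fintype.card_pos
  have hindex_ne_zero : H.index ≠ 0 := index_ne_zero_of_finite
  exact index_eq_one.mp (by omega)

theorem Subgroup.mem_zpowers_of_isCyclic_closure_pair {G : Type*} [Group G] [Finite G]
    {x y : G} (hxy : IsCyclic (closure {x, y} : Subgroup G))
    (hx : ∀ z : G, orderOf z ≤ orderOf x) : y ∈ zpowers x := by
  set C := closure ({x, y} : Set G)
  obtain ⟨c, hc⟩ := IsCyclic.exists_ofOrder_eq_natCard (α := C)
  have hxC : zpowers x = C := eq_of_le_of_card_ge (zpowers_le.mpr (subset_closure (by simp))) <| by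
    rw [Nat.card_zpowers, ← hc, ← orderOf_coe]
    exact hx c
  exact hxC ▸ subset_closure (by simp)

theorem exists_conj_mem_zpowers_of_isCyclic_closure_conj {G : Type*} [Group G] [Finite G]
    {g y a b : G} (hg : ∀ z : G, orderOf z ≤ orderOf g)
    (hcyc : IsCyclic (closure {a⁻¹ * g * a, b⁻¹ * y * b} : Subgroup G)) :
    ∃ c : G, c * y * c⁻¹ ∈ zpowers g := by
  have hconj : orderOf g = orderOf (a⁻¹ * g * a) :=
    SemiconjBy.orderOf_eq a⁻¹ (by simp [SemiconjBy, mul_assoc])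
  obtain ⟨k, hk⟩ := mem_zpowers_of_isCyclic_closure_pair hcyc (hconj ▸ hg)
  have hk' : a⁻¹ * g ^ k * a = b⁻¹ * y * b := by
    rw [← hk]
    simpa only [inv_inv] using (conj_zpow (a := a⁻¹) (b := g) (i := k)).symm
  refine ⟨a * b⁻¹, k, ?_⟩
  calc g ^ k = a * (a⁻¹ * g ^ k * a) * a⁻¹ := by group
    _ = a * b⁻¹ * y * (a * b⁻¹)⁻¹ := by rw [hk']; group

theorem stmt_19 (G : Type*) [Group G] [Finite G] :
    ((∀ x y : G, Commute x y) →
      ∀ x y : G, ∃ a b : G, Commute (a⁻¹ * x * a) (b⁻¹ * y * b)) ∧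
    ((∀ x y : G, x ≠ y →
        ∃ a b : G, IsCyclic ↥(Subgroup.closure ({a⁻¹ * x * a, b⁻¹ * y * b} : Set G))) →
      IsCyclic G) := by
  refine ⟨fun hcomm x y => ⟨1, 1, hcomm _ _⟩, fun h => ?_⟩
  obtain ⟨g, hg⟩ := Finite.exists_max (orderOf : G → ℕ)
  refine isCyclic_iff_exists_zpowers_eq_top.mpr
    ⟨g, (zpowers g).eq_top_of_forall_exists_conj_mem fun y => ?_⟩
  by_cases hy : g = y
  · exact ⟨1, by simp [← hy]⟩
  obtain ⟨a, b, hcyc⟩ := h g y hy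
  exact exists_conj_mem_zpowers_of_isCyclic_closure_conj hg hcyc
end
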